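/- Let {Y_n}_{n≥1} and {X_{n,k}}_{n,k≥1} be real-valued random variables defined on a common probability space, all with mean zero and finite variance. Assume: (i) for each k there is σ_k² ≥ 0 such that, as n → ∞, X_{n,k} converges in distribution to N(0, σ_k²) and Var[X_{n,k}] → σ_k²; (ii) lim_{k→∞} limsup_{n→∞} Var[X_{n,k} − Y_n] = 0. Then the limit σ² := lim_{k→∞} σ_k² exists (and is finite), and Var[Y_n] → σ² as n → ∞. -/

import Mathlib

/-!
The standard deviation `√Var` is a seminorm on `L²` (it is the `L²` norm of the centred
variable), so `|√Var[X n k] - √Var[Y n]| ≤ √Var[X n k - Y n]`. The hypothesis on the differences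
thus says that, for large `k`, `√Var[X n k]` is eventually (in `n`) close to `√Var[Y n]`, while
`√Var[X n k] → σ_k`. An iterated-limit argument in the style of Moore–Osgood then shows that
`(σ_k)` is Cauchy and that `√Var[Y n]` tends to its limit; squaring gives the theorem.
-/

open MeasureTheory Filter ProbabilityTheory Topology

section Variance

variable {Ω : Type*} [MeasurableSpace Ω] {μ : Measure Ω}

lemma evariance_eq_eLpNorm_sq (X : Ω → ℝ) :
    evariance X μ = eLpNorm (fun ω => X ω - μ[X]) 2 μ ^ 2 := by
  rw [evariance, eLpNorm_eq_lintegral_rpow_enorm_toReal two_ne_zero ENNReal.ofNat_ne_top,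
    ← ENNReal.rpow_natCast _ 2, ← ENNReal.rpow_mul]
  norm_num

lemma sqrt_variance_eq_toReal_eLpNorm (X : Ω → ℝ) :
    √Var[X; μ] = (eLpNorm (fun ω => X ω - μ[X]) 2 μ).toReal := by
  rw [variance, evariance_eq_eLpNorm_sq, ENNReal.toReal_pow, Real.sqrt_sq ENNReal.toReal_nonneg]

lemma sqrt_variance_add_le [IsFiniteMeasure μ] {X Y : Ω → ℝ} (hX : MemLp X 2 μ)
    (hY : MemLp Y 2 μ) : √Var[X + Y; μ] ≤ √Var[X; μ] + √Var[Y; μ] := by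
  have hXc : MemLp (fun ω => X ω - μ[X]) 2 μ := hX.sub (memLp_const _)
  have hYc : MemLp (fun ω => Y ω - μ[Y]) 2 μ := hY.sub (memLp_const _)
  have hcenter : (fun ω => (X + Y) ω - μ[X + Y]) =
      (fun ω => X ω - μ[X]) + fun ω => Y ω - μ[Y] := by
    ext ω
    simp only [Pi.add_apply, integral_add (hX.integrable one_le_two) (hY.integrable one_le_two)]
    ring
  simp only [sqrt_variance_eq_toReal_eLpNorm, hcenter]
  rw [← ENNReal.toReal_add hXc.eLpNorm_ne_top hYc.eLpNorm_ne_top]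
  exact ENNReal.toReal_mono (ENNReal.add_ne_top.2 ⟨hXc.eLpNorm_ne_top, hYc.eLpNorm_ne_top⟩)
    (eLpNorm_add_le hXc.aestronglyMeasurable hYc.aestronglyMeasurable one_le_two)

lemma abs_sqrt_variance_sub_le [IsFiniteMeasure μ] {X Y : Ω → ℝ} (hX : MemLp X 2 μ)
    (hY : MemLp Y 2 μ) : |√Var[X; μ] - √Var[Y; μ]| ≤ √Var[X - Y; μ] := by
  have hXY := sqrt_variance_add_le (hX.sub hY) hY
  have hYX := sqrt_variance_add_le (hY.sub hX) hX
  rw [sub_add_cancel] at hXY hYX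
  rw [← neg_sub X Y, variance_neg] at hYX
  exact abs_sub_le_iff.2 ⟨by linarith, by linarith⟩

end Variance

theorem exists_tendsto_of_eventually_dist_le {α ι : Type*} [PseudoMetricSpace α]
    [CompleteSpace α] {l : Filter ι} [l.NeBot] {F : ℕ → ι → α} {G : ι → α} {s : ℕ → α}
    (hF : ∀ k, Tendsto (F k) l (𝓝 (s k)))
    (hFG : ∀ ε > 0, ∀ᶠ k in atTop, ∀ᶠ n in l, dist (F k n) (G n) ≤ ε) :
    ∃ L, Tendsto s atTop (𝓝 L) ∧ Tendsto G l (𝓝 L) := by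
  have hs : CauchySeq s := by
    refine Metric.cauchySeq_iff.2 fun ε hε => ?_
    obtain ⟨K, hK⟩ := eventually_atTop.1 (hFG (ε / 3) (by positivity))
    refine ⟨K, fun k hk k' hk' => ?_⟩
    have hdist : ∀ᶠ n in l, dist (F k n) (F k' n) ≤ 2 * (ε / 3) := by
      filter_upwards [hK k hk, hK k' hk'] with n h h'
      linarith [dist_triangle_right (F k n) (F k' n) (G n)]
    have := le_of_tendsto ((hF k).dist (hF k')) hdist
    linarith
  obtain ⟨L, hL⟩ := cauchySeq_tendsto_of_complete hs
  refine ⟨L, hL, Metric.tendsto_nhds.2 fun ε hε => ?_⟩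
  obtain ⟨k, hkG, hkL⟩ :=
    ((hFG (ε / 3) (by positivity)).and (Metric.tendsto_nhds.1 hL (ε / 3) (by positivity))).exists
  filter_upwards [hkG, Metric.tendsto_nhds.1 (hF k) (ε / 3) (by positivity)] with n hG hFs
  calc dist (G n) L ≤ dist (F k n) (G n) + (dist (F k n) (s k) + dist (s k) L) := by
        linarith [dist_triangle_left (G n) L (F k n), dist_triangle (F k n) (s k) L]
    _ < ε := by linarith

theorem stmt_1_general
    (Ω : Type) [MeasurableSpace Ω] (P : Measure Ω) [IsProbabilityMeasure P]
    (Y : ℕ → Ω → ℝ) (X : ℕ → ℕ → Ω → ℝ)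
    (hYL2 : ∀ n, MemLp (Y n) 2 P) (hXL2 : ∀ n k, MemLp (X n k) 2 P)
    (σk2 : ℕ → ℝ)
    (hvar : ∀ k, Tendsto (fun n : ℕ => variance (X n k) P) atTop (nhds (σk2 k)))
    (happrox : ∀ ε : ℝ, 0 < ε → ∃ K : ℕ, ∀ k ≥ K,
      ∀ᶠ n in atTop, variance (fun ω => X n k ω - Y n ω) P ≤ ε) :
    ∃ σ2 : ℝ, 0 ≤ σ2 ∧ Tendsto σk2 atTop (nhds σ2) ∧
      Tendsto (fun n : ℕ => variance (Y n) P) atTop (nhds σ2) := by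
  have hσk2 : ∀ k, 0 ≤ σk2 k := fun k => ge_of_tendsto' (hvar k) fun _ => variance_nonneg _ _
  obtain ⟨L, hσL, hYL⟩ := exists_tendsto_of_eventually_dist_le
    (F := fun k n => √Var[X n k; P]) (G := fun n => √Var[Y n; P]) (fun k => (hvar k).sqrt)
    fun ε hε => by
      filter_upwards [eventually_atTop.2 (happrox (ε ^ 2) (by positivity))] with k hk
      filter_upwards [hk] with n hn
      calc dist √Var[X n k; P] √Var[Y n; P] ≤ √Var[X n k - Y n; P] :=
            (Real.dist_eq _ _).trans_le (abs_sqrt_variance_sub_le (hXL2 n k) (hYL2 n))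
        _ ≤ √(ε ^ 2) := Real.sqrt_le_sqrt hn
        _ = ε := Real.sqrt_sq hε.le
  refine ⟨L ^ 2, sq_nonneg L, ?_, ?_⟩
  · simpa only [Real.sq_sqrt (hσk2 _)] using hσL.pow 2
  · simpa only [Real.sq_sqrt (variance_nonneg _ _)] using hYL.pow 2

/-- Lemma 2.2 of the paper (convergence of variances part): if for each `k`,
`X n k` converges in distribution to `N(0, σk²)` with convergence of variances,
and `lim_k limsup_n Var[X n k - Y n] = 0`, then `σ² = lim_k σk²` exists and
`Var[Y n] → σ²`. -/
theorem stmt_1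
    (Ω : Type) [MeasurableSpace Ω] (P : Measure Ω) [IsProbabilityMeasure P]
    (Y : ℕ → Ω → ℝ) (X : ℕ → ℕ → Ω → ℝ)
    (hYmeas : ∀ n, Measurable (Y n)) (hXmeas : ∀ n k, Measurable (X n k))
    (hYL2 : ∀ n, MemLp (Y n) 2 P) (hXL2 : ∀ n k, MemLp (X n k) 2 P)
    (hYmean : ∀ n, ∫ ω, Y n ω ∂P = 0) (hXmean : ∀ n k, ∫ ω, X n k ω ∂P = 0)
    (σk2 : ℕ → ℝ) (hσk2 : ∀ k, 0 ≤ σk2 k)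
    (hdist : ∀ k, ∀ g : BoundedContinuousFunction ℝ ℝ,
      Tendsto (fun n : ℕ => ∫ ω, g (X n k ω) ∂P) atTop
        (nhds (∫ x, g x ∂(gaussianReal 0 ⟨σk2 k, hσk2 k⟩))))
    (hvar : ∀ k, Tendsto (fun n : ℕ => variance (X n k) P) atTop (nhds (σk2 k)))
    (happrox : ∀ ε : ℝ, 0 < ε → ∃ K : ℕ, ∀ k ≥ K,
      ∀ᶠ n in atTop, variance (fun ω => X n k ω - Y n ω) P ≤ ε) :
    ∃ σ2 : ℝ, 0 ≤ σ2 ∧ Tendsto σk2 atTop (nhds σ2) ∧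
      Tendsto (fun n : ℕ => variance (Y n) P) atTop (nhds σ2) :=
  stmt_1_general Ω P Y X hYL2 hXL2 σk2 hvar happrox
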